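/- Let k be a field and V a k-vector space of dimension 2n with a nondegenerate alternating bilinear form (,). Let p_* = (p_1 ≥ … ≥ p_σ) ∈ 𝒫_n, let g be a unipotent isometry of V, N := g − 1, and let v_1, …, v_σ ∈ V satisfy: (g^i v_t, v_r) = 0 for all 1 ≤ t < r ≤ σ and i ∈ [−p_t, p_t − 1]; (v_r, g^i v_r) = 0 for i ∈ [−p_r + 1, p_r − 1]; (v_r, g^{p_r} v_r) = 1; and the vectors g^j v_t (t ∈ [1,σ], j ∈ [−p_t, p_t − 1]) form a basis of V. Assume that dim N^{k}(V) = Σ_{r=1}^{σ} max(2p_r − k, 0) for every integer k ≥ 0. Then for every r ∈ [1,σ] the subspace X_r = span{g^j v_r : j ∈ [−p_r, p_r − 1]} satisfies gX_r = X_r, and (X_r, X_{r'}) = 0 for all r ≠ r' in [1,σ]. -/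

import Mathlib

/-!
Induction on `r`. If `X_t` is `g`-stable for all `t < r`, then `X_t` is the span of the whole
`g`-orbit of `v_t`, and `(g^i v_t, v_t') = 0` for `i ∈ [-p_t, p_t - 1]` makes it orthogonal to the
orbit of every `v_t'` with `t' > t`. Put `K = 2 p_r` and `N = g - 1`. The vectors
`N^K g^(p_t - K + j) v_t` (`t < r`, `j < 2 p_t - K`) pair unitriangularly with the `g^j' v_t`, so they
are independent, and since `p_t ≤ p_r` for `t ≥ r` the rank hypothesis says there are as many of them
as `dim N^K V`: hence `N^K V ⊆ ∑_{t<r} X_t`. Writing `w = g^(-p_r) v_r`, the vector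
`g^(p_r) v_r = g^K w` is congruent to `N^K w` modulo the span of `g^l w`, `l < K`, which is `X_r`.
But `N^K w` lies in `∑_{t<r} X_t` and in the orbit span of `v_r`, so it is orthogonal to every
`X_t'`; by nondegeneracy it vanishes, `g^(p_r) v_r ∈ X_r`, and `X_r` is `g`-stable.
-/

section

variable {k V : Type*} [Field k] [AddCommGroup V] [Module k V]

/-- For a bilinear form `B` and a subspace `X`, the perpendicular subspace
`X^⊥ = {y ∈ V : B(y,x) = 0 for all x ∈ X}`. -/
def perpSub (B : V →ₗ[k] V →ₗ[k] k) (X : Submodule k V) : Submodule k V where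
  carrier := {y | ∀ x ∈ X, B y x = 0}
  add_mem' := by
    intro a b ha hb
    simp only [Set.mem_setOf_eq] at *
    intro x hx
    rw [map_add, LinearMap.add_apply, ha x hx, hb x hx, add_zero]
  zero_mem' := by
    simp only [Set.mem_setOf_eq]
    intro x hx
    rw [map_zero, LinearMap.zero_apply]
  smul_mem' := by
    intro c a ha
    simp only [Set.mem_setOf_eq] at *
    intro x hx
    rw [map_smul, LinearMap.smul_apply, ha x hx, smul_zero]

/-- `p_{≤r} = p_1 + … + p_r` (so `partialSum p (r-1) = p_{<r}`). -/
def partialSum (p : ℕ → ℕ) (r : ℕ) : ℕ := ∑ t ∈ Finset.Icc 1 r, p t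

/-- `p` represents a sequence `p_1 ≥ p_2 ≥ … ≥ p_σ` of integers `≥ 1` with sum `n`. -/
def IsPartitionOf (n σ : ℕ) (p : ℕ → ℕ) : Prop :=
  1 ≤ σ ∧ (∀ t ∈ Finset.Icc 1 σ, 1 ≤ p t) ∧
    (∀ i j, 1 ≤ i → i ≤ j → j ≤ σ → p j ≤ p i) ∧ (∑ t ∈ Finset.Icc 1 σ, p t) = n

section Isometry

variable {B : V →ₗ[k] V →ₗ[k] k} {g : V ≃ₗ[k] V}

theorem isometry_zpow (hg : ∀ x y : V, B (g x) (g y) = B x y) (i : ℤ) (x y : V) :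
    B ((g ^ i) x) ((g ^ i) y) = B x y := by
  induction i using Int.induction_on generalizing x y with
  | zero => rfl
  | succ n ih => rw [zpow_add_one, LinearEquiv.mul_apply, LinearEquiv.mul_apply, ih, hg]
  | pred n ih =>
    rw [zpow_sub_one, LinearEquiv.mul_apply, LinearEquiv.mul_apply, ih, ← hg,
      LinearEquiv.coe_inv, LinearEquiv.apply_symm_apply, LinearEquiv.apply_symm_apply]

theorem apply_zpow_zpow (hg : ∀ x y : V, B (g x) (g y) = B x y) (i j : ℤ) (x y : V) :
    B ((g ^ i) x) ((g ^ j) y) = B ((g ^ (i - j)) x) y := by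
  rw [← isometry_zpow hg j ((g ^ (i - j)) x) y, ← LinearEquiv.mul_apply, ← zpow_add,
    add_sub_cancel]

end Isometry

theorem LinearEquiv.apply_zpow_apply (g : V ≃ₗ[k] V) (c : ℤ) (x : V) :
    g ((g ^ c) x) = (g ^ (c + 1)) x := by
  rw [add_comm, zpow_one_add, LinearEquiv.mul_apply]

theorem LinearEquiv.toLinearMap_pow_apply (g : V ≃ₗ[k] V) (l : ℕ) (x : V) :
    (g.toLinearMap ^ l) x = (g ^ (l : ℤ)) x := by
  rw [zpow_natCast, LinearEquiv.pow_apply, Module.End.pow_apply, LinearEquiv.coe_toLinearMap]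

open Pointwise in
theorem LinearEquiv.zpow_apply_mem_of_map_eq {g : V ≃ₗ[k] V} {W : Submodule k V}
    (h : W.map g.toLinearMap = W) (i : ℤ) {x : V} (hx : x ∈ W) : (g ^ i) x ∈ W := by
  have hi : g ^ i ∈ MulAction.stabilizer (V ≃ₗ[k] V) W :=
    Subgroup.zpow_mem _ (MulAction.mem_stabilizer_iff.2 h) i
  rw [← MulAction.mem_stabilizer_iff.1 hi]
  exact Submodule.smul_mem_pointwise_smul x _ W hx

section Spans

variable (g : V ≃ₗ[k] V)

def orbitSpan (x : V) : Submodule k V :=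
  Submodule.span k (Set.range fun i : ℤ => (g ^ i) x)

/-- The paper's `X_r` is `segmentSpan g (v r) (p r)`. -/
def segmentSpan (x : V) (m : ℕ) : Submodule k V :=
  Submodule.span k {y | ∃ j : ℤ, -(m : ℤ) ≤ j ∧ j ≤ (m : ℤ) - 1 ∧ y = (g ^ j) x}

variable {g}

theorem zpow_apply_mem_orbitSpan (x : V) (i : ℤ) : (g ^ i) x ∈ orbitSpan g x :=
  Submodule.subset_span ⟨i, rfl⟩

theorem apply_mem_orbitSpan {x y : V} (hy : y ∈ orbitSpan g x) : g y ∈ orbitSpan g x := by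
  have hle : orbitSpan g x ≤ (orbitSpan g x).comap g.toLinearMap := by
    refine Submodule.span_le.2 ?_
    rintro _ ⟨i, rfl⟩
    show g ((g ^ i) x) ∈ orbitSpan g x
    rw [g.apply_zpow_apply]
    exact zpow_apply_mem_orbitSpan x (i + 1)
  exact hle hy

theorem sub_one_pow_apply_mem_orbitSpan {x y : V} (K : ℕ) (hy : y ∈ orbitSpan g x) :
    ((g.toLinearMap - LinearMap.id : Module.End k V) ^ K) y ∈ orbitSpan g x :=
  Module.End.pow_apply_mem_of_forall_mem K (fun _ hz => sub_mem (apply_mem_orbitSpan hz) hz) y hy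

theorem zpow_apply_mem_segmentSpan {x : V} {m : ℕ} {j : ℤ} (h₁ : -(m : ℤ) ≤ j)
    (h₂ : j ≤ (m : ℤ) - 1) : (g ^ j) x ∈ segmentSpan g x m :=
  Submodule.subset_span ⟨j, h₁, h₂, rfl⟩

theorem segmentSpan_le_orbitSpan (x : V) (m : ℕ) : segmentSpan g x m ≤ orbitSpan g x :=
  Submodule.span_mono <| by rintro _ ⟨j, -, -, rfl⟩; exact ⟨j, rfl⟩

variable [FiniteDimensional k V]

theorem map_segmentSpan_eq {x : V} {m : ℕ} (h : (g ^ (m : ℤ)) x ∈ segmentSpan g x m) :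
    (segmentSpan g x m).map g.toLinearMap = segmentSpan g x m := by
  refine Submodule.eq_of_le_of_finrank_le ?_ (LinearEquiv.finrank_map_eq g _).ge
  refine (Submodule.map_span_le _ _ _).2 ?_
  rintro _ ⟨j, hj₁, hj₂, rfl⟩
  rw [LinearEquiv.coe_coe, g.apply_zpow_apply]
  rcases (show j + 1 ≤ (m : ℤ) - 1 ∨ j + 1 = m by omega) with hj | hj
  · exact zpow_apply_mem_segmentSpan (by omega) hj
  · rwa [hj]

theorem orbitSpan_le_segmentSpan {x : V} {m : ℕ} (hm : 1 ≤ m)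
    (h : (g ^ (m : ℤ)) x ∈ segmentSpan g x m) : orbitSpan g x ≤ segmentSpan g x m := by
  have hx : x ∈ segmentSpan g x m := by
    simpa using zpow_apply_mem_segmentSpan (g := g) (x := x) (j := 0) (by omega) (by omega)
  refine Submodule.span_le.2 ?_
  rintro _ ⟨i, rfl⟩
  exact g.zpow_apply_mem_of_map_eq (map_segmentSpan_eq h) i hx

end Spans

section Orthogonality

variable {B : V →ₗ[k] V →ₗ[k] k}

theorem span_le_perpSub_span {S S' : Set V} (h : ∀ x ∈ S, ∀ y ∈ S', B x y = 0) :
    Submodule.span k S ≤ perpSub B (Submodule.span k S') := by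
  refine Submodule.span_le.2 fun x hx y hy => ?_
  have hker : Submodule.span k S' ≤ LinearMap.ker (B x) :=
    Submodule.span_le.2 fun y hy => h x hx y hy
  exact hker hy

theorem le_perpSub_symm (hB : B.IsRefl) {W W' : Submodule k V} (h : W ≤ perpSub B W') :
    W' ≤ perpSub B W :=
  fun y hy _ hx => hB _ _ (h hx y hy)

theorem orbitSpan_le_perpSub_orbitSpan {g : V ≃ₗ[k] V} (hg : ∀ x y : V, B (g x) (g y) = B x y)
    {x y : V} {m : ℕ} (hstab : orbitSpan g x ≤ segmentSpan g x m)
    (hxy : ∀ j : ℤ, -(m : ℤ) ≤ j → j ≤ (m : ℤ) - 1 → B ((g ^ j) x) y = 0) :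
    orbitSpan g x ≤ perpSub B (orbitSpan g y) := by
  have hseg : segmentSpan g x m ≤ perpSub B (Submodule.span k {y}) :=
    span_le_perpSub_span <| by rintro _ ⟨j, hj₁, hj₂, rfl⟩ _ rfl; exact hxy j hj₁ hj₂
  refine span_le_perpSub_span ?_
  rintro _ ⟨i, rfl⟩ _ ⟨j, rfl⟩
  rw [apply_zpow_zpow hg]
  exact hseg (hstab (zpow_apply_mem_orbitSpan x _)) y (Submodule.mem_span_singleton_self y)

end Orthogonality

theorem linearIndependent_of_triangular {ι α R M : Type*} [Ring R] [NoZeroDivisors R]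
    [AddCommGroup M] [Module R M] [LinearOrder α] (u : ι → M) (f : ι → M →ₗ[R] R) (ρ : ι → α)
    (hdiag : ∀ i, f i (u i) ≠ 0) (hoff : ∀ i j, i ≠ j → ρ i ≤ ρ j → f j (u i) = 0) :
    LinearIndependent R u := by
  classical
  rw [linearIndependent_iff']
  intro s c hc i hi
  by_contra hci
  obtain ⟨i₀, hi₀, hmax⟩ :=
    (s.filter (c · ≠ 0)).exists_max_image ρ ⟨i, Finset.mem_filter.2 ⟨hi, hci⟩⟩
  obtain ⟨hi₀s, hci₀⟩ := Finset.mem_filter.1 hi₀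
  have hsum := congrArg (f i₀) hc
  rw [map_sum, map_zero, Finset.sum_eq_single i₀ ?_ (absurd hi₀s), map_smul, smul_eq_mul]
    at hsum
  · exact mul_ne_zero hci₀ (hdiag i₀) hsum
  · intro j hj hji
    by_cases hcj : c j = 0
    · rw [hcj, zero_smul, map_zero]
    · rw [map_smul, hoff j i₀ hji (hmax j (Finset.mem_filter.2 ⟨hj, hcj⟩)), smul_zero]

section Krylov

variable {R M : Type*} [Ring R] [AddCommGroup M] [Module R M] {f : Module.End R M}
  {W : Submodule R M}

theorem sub_one_pow_apply_mem {x : M} (K : ℕ) (h : ∀ l ≤ K, (f ^ l) x ∈ W) :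
    ((f - 1) ^ K) x ∈ W := by
  induction K generalizing x with
  | zero => simpa using h 0 le_rfl
  | succ K ih =>
    have hfx : ((f - 1) ^ K) (f x) ∈ W :=
      ih fun l hl => by rw [← Module.End.mul_apply, ← pow_succ]; exact h (l + 1) (by omega)
    rw [pow_succ, Module.End.mul_apply, LinearMap.sub_apply, Module.End.one_apply, map_sub]
    exact sub_mem hfx (ih fun l hl => h l (by omega))

theorem pow_apply_sub_sub_one_pow_apply_mem {x : M} (K : ℕ) (h : ∀ l < K, (f ^ l) x ∈ W) :
    (f ^ K) x - ((f - 1) ^ K) x ∈ W := by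
  induction K generalizing x with
  | zero => simp
  | succ K ih =>
    have hfx : (f ^ K) (f x) - ((f - 1) ^ K) (f x) ∈ W :=
      ih fun l hl => by rw [← Module.End.mul_apply, ← pow_succ]; exact h (l + 1) (by omega)
    have hx : ((f - 1) ^ K) x ∈ W := sub_one_pow_apply_mem K fun l hl => h l (by omega)
    rw [pow_succ, pow_succ, Module.End.mul_apply, Module.End.mul_apply, LinearMap.sub_apply,
      Module.End.one_apply, map_sub, sub_sub_eq_add_sub, add_sub_right_comm]
    exact add_mem hfx hx

end Krylov

theorem sub_one_pow_zpow_apply {g : V ≃ₗ[k] V} {φ : V →ₗ[k] k} {x : V} {lo q : ℤ} {a : k}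
    (hφ : ∀ i, lo ≤ i → i ≤ q → φ ((g ^ i) x) = if i = q then a else 0) (K : ℕ) {c : ℤ}
    (hc : lo ≤ c) (hcK : c + K ≤ q) :
    φ (((g.toLinearMap - LinearMap.id : Module.End k V) ^ K) ((g ^ c) x)) =
      if c + K = q then a else 0 := by
  induction K generalizing c with
  | zero => simpa using hφ c hc (by simpa using hcK)
  | succ K ih =>
    have hnext := ih (c := c + 1) (by omega) (by omega)
    have hcur := ih hc (by omega)
    rw [if_neg (by omega)] at hcur
    rw [pow_succ, Module.End.mul_apply, LinearMap.sub_apply, LinearMap.id_apply,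
      LinearEquiv.coe_coe, g.apply_zpow_apply, map_sub, map_sub, hnext, hcur, sub_zero]
    push_cast
    rw [add_right_comm, add_assoc]

theorem sum_Icc_tsub_eq_sum_Ico {q : ℕ → ℕ} {σ r : ℕ}
    (hanti : ∀ i j, 1 ≤ i → i ≤ j → j ≤ σ → q j ≤ q i) (hr : r ∈ Finset.Icc 1 σ) :
    ∑ t ∈ Finset.Icc 1 σ, (q t - q r) = ∑ t ∈ Finset.Ico 1 r, (q t - q r) := by
  rw [Finset.mem_Icc] at hr
  refine (Finset.sum_subset (fun t ht => ?_) fun t ht hnt => ?_).symm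
  · rw [Finset.mem_Ico] at ht
    rw [Finset.mem_Icc]
    omega
  · rw [Finset.mem_Icc] at ht
    rw [Finset.mem_Ico] at hnt
    have := hanti r t hr.1 (by omega) ht.2
    omega

section Pairing

variable {B : V →ₗ[k] V →ₗ[k] k} {g : V ≃ₗ[k] V}

theorem form_sub_one_pow_zpow_zpow (hg : ∀ x y : V, B (g x) (g y) = B x y) {x : V} {p : ℕ}
    (hval : ∀ i : ℤ, -(p : ℤ) + 1 ≤ i → i ≤ p → B ((g ^ i) x) x = if i = p then -1 else 0)
    {K j j' : ℕ} (hjj' : j ≤ j') (hj' : j' < 2 * p - K) :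
    B (((g.toLinearMap - LinearMap.id : Module.End k V) ^ K) ((g ^ ((p : ℤ) - K + j)) x))
      ((g ^ (j' : ℤ)) x) = if j = j' then -1 else 0 := by
  have hφ : ∀ i : ℤ, -(p : ℤ) + 1 + j' ≤ i → i ≤ p + j' →
      B.flip ((g ^ (j' : ℤ)) x) ((g ^ i) x) = if i = p + j' then -1 else 0 := by
    intro i hi₁ hi₂
    rw [LinearMap.flip_apply, apply_zpow_zpow hg, hval (i - j') (by omega) (by omega)]
    simp only [sub_eq_iff_eq_add]
  have h := sub_one_pow_zpow_apply hφ K (c := p - K + j) (by omega) (by omega)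
  rw [LinearMap.flip_apply] at h
  rw [h]
  split_ifs <;> first | rfl | (exfalso; omega)

variable [FiniteDimensional k V]

theorem range_sub_one_pow_le_iSup_orbitSpan (hg : ∀ x y : V, B (g x) (g y) = B x y)
    {p : ℕ → ℕ} {v : ℕ → V} {s : Finset ℕ} {K : ℕ}
    (horth : ∀ t ∈ s, ∀ t' ∈ s, t ≠ t' → orbitSpan g (v t) ≤ perpSub B (orbitSpan g (v t')))
    (hval : ∀ t ∈ s, ∀ i : ℤ, -(p t : ℤ) + 1 ≤ i → i ≤ p t →
      B ((g ^ i) (v t)) (v t) = if i = p t then -1 else 0)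
    (hrank : Module.finrank k
        (LinearMap.range ((g.toLinearMap - LinearMap.id : Module.End k V) ^ K))
      ≤ ∑ t ∈ s, (2 * p t - K)) :
    LinearMap.range ((g.toLinearMap - LinearMap.id : Module.End k V) ^ K) ≤
      ⨆ t ∈ s, orbitSpan g (v t) := by
  set N : Module.End k V := g.toLinearMap - LinearMap.id
  set T := s.sigma fun t => Finset.range (2 * p t - K)
  let u : T → V := fun q => (N ^ K) ((g ^ ((p q.1.1 : ℤ) - K + q.1.2)) (v q.1.1))
  have hu : ∀ q : T, u q ∈ orbitSpan g (v q.1.1) := fun q =>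
    sub_one_pow_apply_mem_orbitSpan K (zpow_apply_mem_orbitSpan _ _)
  have hli : LinearIndependent k u := by
    refine linearIndependent_of_triangular u (fun q => B.flip ((g ^ (q.1.2 : ℤ)) (v q.1.1)))
      (fun q => q.1.2) ?_ ?_
    · rintro ⟨⟨t, j⟩, hq⟩
      obtain ⟨ht, hj⟩ := Finset.mem_sigma.1 hq
      rw [LinearMap.flip_apply, form_sub_one_pow_zpow_zpow hg (hval t ht) le_rfl
        (Finset.mem_range.1 hj), if_pos rfl]
      exact neg_ne_zero.2 one_ne_zero
    · rintro ⟨⟨t, j⟩, hq⟩ ⟨⟨t', j'⟩, hq'⟩ hne hjj'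
      obtain ⟨ht, -⟩ := Finset.mem_sigma.1 hq
      obtain ⟨ht', hj'⟩ := Finset.mem_sigma.1 hq'
      rw [LinearMap.flip_apply]
      by_cases htt : t = t'
      · subst htt
        rw [form_sub_one_pow_zpow_zpow hg (hval t ht) hjj' (Finset.mem_range.1 hj'), if_neg]
        rintro rfl
        exact hne rfl
      · exact horth t ht t' ht' htt (hu ⟨⟨t, j⟩, hq⟩) _ (zpow_apply_mem_orbitSpan _ _)
  have hle : Submodule.span k (Set.range u) ≤ LinearMap.range (N ^ K) :=
    Submodule.span_le.2 <| by rintro _ ⟨q, rfl⟩; exact LinearMap.mem_range_self _ _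
  have hcard : ∑ t ∈ s, (2 * p t - K) = Module.finrank k (Submodule.span k (Set.range u)) := by
    rw [finrank_span_eq_card hli, Fintype.card_coe, Finset.card_sigma]
    simp only [Finset.card_range]
  rw [← Submodule.eq_of_le_of_finrank_le hle (hrank.trans hcard.le), Submodule.span_le]
  rintro _ ⟨q, rfl⟩
  exact le_iSup₂ (f := fun t _ => orbitSpan g (v t)) q.1.1 (Finset.mem_sigma.1 q.2).1 (hu q)

end Pairing

theorem zpow_self_mem_segmentSpan [FiniteDimensional k V] {B : V →ₗ[k] V →ₗ[k] k}
    {g : V ≃ₗ[k] V} (hg : ∀ x y : V, B (g x) (g y) = B x y) (hB : B.IsRefl)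
    (hnd : ∀ x : V, (∀ y : V, B x y = 0) → x = 0) {σ r : ℕ} {p : ℕ → ℕ} {v : ℕ → V}
    (hanti : ∀ i j, 1 ≤ i → i ≤ j → j ≤ σ → p j ≤ p i) (hr : r ∈ Finset.Icc 1 σ)
    (hspan : Submodule.span k
      {y | ∃ t, 1 ≤ t ∧ t ≤ σ ∧ ∃ j : ℤ, -(p t : ℤ) ≤ j ∧ j ≤ (p t : ℤ) - 1 ∧ y = (g ^ j) (v t)}
      = ⊤)
    (horth : ∀ t ∈ Finset.Ico 1 r, ∀ t' ∈ Finset.Icc 1 σ, t < t' →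
      orbitSpan g (v t) ≤ perpSub B (orbitSpan g (v t')))
    (hval : ∀ t ∈ Finset.Ico 1 r, ∀ i : ℤ, -(p t : ℤ) + 1 ≤ i → i ≤ p t →
      B ((g ^ i) (v t)) (v t) = if i = p t then -1 else 0)
    (hrank : Module.finrank k
        (LinearMap.range ((g.toLinearMap - LinearMap.id : Module.End k V) ^ (2 * p r)))
      = ∑ t ∈ Finset.Icc 1 σ, (2 * p t - 2 * p r)) :
    (g ^ (p r : ℤ)) (v r) ∈ segmentSpan g (v r) (p r) := by
  set K := 2 * p r with hK
  set N : Module.End k V := g.toLinearMap - LinearMap.id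
  set w := (g ^ (-(p r : ℤ))) (v r)
  have hIcc : Finset.Ico 1 r ⊆ Finset.Icc 1 σ :=
    Finset.Ico_subset_Icc_self.trans (Finset.Icc_subset_Icc le_rfl (Finset.mem_Icc.1 hr).2)
  have hZ : LinearMap.range (N ^ K) ≤ ⨆ t ∈ Finset.Ico 1 r, orbitSpan g (v t) := by
    refine range_sub_one_pow_le_iSup_orbitSpan hg (fun t ht t' ht' htt' => ?_) hval ?_
    · rcases htt'.lt_or_gt with h | h
      · exact horth t ht t' (hIcc ht') h
      · exact le_perpSub_symm hB (horth t' ht' t (hIcc ht) h)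
    · rw [hrank, sum_Icc_tsub_eq_sum_Ico (q := fun t => 2 * p t)
        (fun i j hi hij hj => Nat.mul_le_mul_left 2 (hanti i j hi hij hj)) hr]
  have hz : (N ^ K) w = 0 := by
    refine hnd _ fun y => ?_
    suffices h : ⊤ ≤ LinearMap.ker (B ((N ^ K) w)) from h Submodule.mem_top
    rw [← hspan, Submodule.span_le]
    rintro _ ⟨t', ht'₁, ht'σ, j, -, -, rfl⟩
    have hy : (g ^ j) (v t') ∈ orbitSpan g (v t') := zpow_apply_mem_orbitSpan _ _
    rcases lt_or_ge t' r with h | h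
    · exact hB _ _ (horth t' (Finset.mem_Ico.2 ⟨ht'₁, h⟩) r hr h hy _
        (sub_one_pow_apply_mem_orbitSpan K (zpow_apply_mem_orbitSpan _ _)))
    · have hperp : ⨆ t ∈ Finset.Ico 1 r, orbitSpan g (v t) ≤ perpSub B (orbitSpan g (v t')) :=
        iSup₂_le fun t ht =>
          horth t ht t' (Finset.mem_Icc.2 ⟨ht'₁, ht'σ⟩) ((Finset.mem_Ico.1 ht).2.trans_le h)
      exact hperp (hZ (LinearMap.mem_range_self _ w)) _ hy
  have hmem := pow_apply_sub_sub_one_pow_apply_mem (f := g.toLinearMap)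
    (W := segmentSpan g (v r) (p r)) (x := w) K fun l hl => by
      rw [g.toLinearMap_pow_apply, ← LinearEquiv.mul_apply, ← zpow_add]
      exact zpow_apply_mem_segmentSpan (by omega) (by omega)
  rwa [show ((g.toLinearMap - 1) ^ K) w = 0 from hz, sub_zero, g.toLinearMap_pow_apply,
    ← LinearEquiv.mul_apply, ← zpow_add, show (K : ℤ) + -(p r : ℤ) = p r by omega] at hmem

theorem stmt_12_general [FiniteDimensional k V] (n σ : ℕ) (p : ℕ → ℕ)
    (hp : IsPartitionOf n σ p)
    (B : V →ₗ[k] V →ₗ[k] k)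
    (halt : ∀ x : V, B x x = 0)
    (hnd : ∀ x : V, (∀ y : V, B x y = 0) → x = 0)
    (g : V ≃ₗ[k] V)
    (hg : ∀ x y : V, B (g x) (g y) = B x y)
    (v : ℕ → V)
    (hv1 : ∀ r ∈ Finset.Icc 1 σ, ∀ t, 1 ≤ t → t < r →
      ∀ i : ℤ, -(p t : ℤ) ≤ i → i ≤ (p t : ℤ) - 1 → B ((g ^ i) (v t)) (v r) = 0)
    (hv2 : ∀ r ∈ Finset.Icc 1 σ,
      ∀ i : ℤ, -(p r : ℤ) + 1 ≤ i → i ≤ (p r : ℤ) - 1 → B (v r) ((g ^ i) (v r)) = 0)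
    (hv3 : ∀ r ∈ Finset.Icc 1 σ, B (v r) ((g ^ (p r : ℤ)) (v r)) = 1)
    (hv_sp : Submodule.span k
      {y | ∃ t, 1 ≤ t ∧ t ≤ σ ∧ ∃ j : ℤ, -(p t : ℤ) ≤ j ∧ j ≤ (p t : ℤ) - 1 ∧ y = (g ^ j) (v t)}
      = ⊤)
    (hrank : ∀ K : ℕ, Module.finrank k
        (LinearMap.range ((g.toLinearMap - LinearMap.id : Module.End k V) ^ K))
      = ∑ r ∈ Finset.Icc 1 σ, (2 * p r - K)) :
    let X : ℕ → Submodule k V := fun r => Submodule.span k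
      {y | ∃ j : ℤ, -(p r : ℤ) ≤ j ∧ j ≤ (p r : ℤ) - 1 ∧ y = (g ^ j) (v r)}
    (∀ r ∈ Finset.Icc 1 σ, Submodule.map g.toLinearMap (X r) = X r) ∧
    (∀ r ∈ Finset.Icc 1 σ, ∀ r' ∈ Finset.Icc 1 σ, r ≠ r' →
      ∀ x ∈ X r, ∀ y ∈ X r', B x y = 0) := by
  intro X
  obtain ⟨-, hp₁, hanti, -⟩ := hp
  have hB : B.IsRefl := LinearMap.IsAlt.isRefl halt
  have hval : ∀ t ∈ Finset.Icc 1 σ, ∀ i : ℤ, -(p t : ℤ) + 1 ≤ i → i ≤ p t →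
      B ((g ^ i) (v t)) (v t) = if i = p t then -1 else 0 := by
    intro t ht i hi₁ hi₂
    rw [← LinearMap.IsAlt.neg halt]
    split_ifs with hi
    · rw [hi, hv3 t ht]
    · rw [hv2 t ht i hi₁ (by omega), neg_zero]
  have horth : ∀ t ∈ Finset.Icc 1 σ, ∀ t' ∈ Finset.Icc 1 σ, t < t' →
      (g ^ (p t : ℤ)) (v t) ∈ X t → orbitSpan g (v t) ≤ perpSub B (orbitSpan g (v t')) :=
    fun t ht t' ht' htt' hstab => orbitSpan_le_perpSub_orbitSpan hg
      (orbitSpan_le_segmentSpan (hp₁ t ht) hstab) (hv1 t' ht' t (Finset.mem_Icc.1 ht).1 htt')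
  have hstab : ∀ r ∈ Finset.Icc 1 σ, (g ^ (p r : ℤ)) (v r) ∈ X r := by
    intro r
    induction r using Nat.strong_induction_on with
    | _ r ih =>
      intro hr
      have hIcc : Finset.Ico 1 r ⊆ Finset.Icc 1 σ :=
        Finset.Ico_subset_Icc_self.trans (Finset.Icc_subset_Icc le_rfl (Finset.mem_Icc.1 hr).2)
      exact zpow_self_mem_segmentSpan hg hB hnd hanti hr hv_sp
        (fun t ht t' ht' htt' => horth t (hIcc ht) t' ht' htt'
          (ih t (Finset.mem_Ico.1 ht).2 (hIcc ht)))
        (fun t ht => hval t (hIcc ht)) (hrank _)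
  refine ⟨fun r hr => map_segmentSpan_eq (hstab r hr), fun r hr r' hr' hne x hx y hy => ?_⟩
  have hx' := segmentSpan_le_orbitSpan (v r) (p r) hx
  have hy' := segmentSpan_le_orbitSpan (v r') (p r') hy
  rcases hne.lt_or_gt with h | h
  · exact horth r hr r' hr' h (hstab r hr) hx' y hy'
  · exact le_perpSub_symm hB (horth r' hr' r hr h (hstab r' hr')) hx' y hy'

/-- 3.5(c): with notation as in 3.5, if
`dim N^K(V) = Σ_{r=1}^σ max(2p_r − K, 0)` for every `K ≥ 0`, then each subspace
`X_r = span{g^j v_r : j ∈ [−p_r, p_r−1]}` is `g`-stable, and `(X_r, X_{r'}) = 0` for `r ≠ r'`. -/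
theorem stmt_12 [FiniteDimensional k V] (n σ : ℕ) (p : ℕ → ℕ)
    (hp : IsPartitionOf n σ p)
    (B : V →ₗ[k] V →ₗ[k] k)
    (halt : ∀ x : V, B x x = 0)
    (hnd : ∀ x : V, (∀ y : V, B x y = 0) → x = 0)
    (hdim : Module.finrank k V = 2 * n)
    (g : V ≃ₗ[k] V)
    (hg : ∀ x y : V, B (g x) (g y) = B x y)
    (hgu : IsNilpotent (g.toLinearMap - LinearMap.id : Module.End k V))
    (v : ℕ → V)
    (hv1 : ∀ r ∈ Finset.Icc 1 σ, ∀ t, 1 ≤ t → t < r →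
      ∀ i : ℤ, -(p t : ℤ) ≤ i → i ≤ (p t : ℤ) - 1 → B ((g ^ i) (v t)) (v r) = 0)
    (hv2 : ∀ r ∈ Finset.Icc 1 σ,
      ∀ i : ℤ, -(p r : ℤ) + 1 ≤ i → i ≤ (p r : ℤ) - 1 → B (v r) ((g ^ i) (v r)) = 0)
    (hv3 : ∀ r ∈ Finset.Icc 1 σ, B (v r) ((g ^ (p r : ℤ)) (v r)) = 1)
    (hv_li : LinearIndependent k
      (fun q : {q : ℕ × ℤ // 1 ≤ q.1 ∧ q.1 ≤ σ ∧ -(p q.1 : ℤ) ≤ q.2 ∧ q.2 ≤ (p q.1 : ℤ) - 1} =>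
        (g ^ q.1.2) (v q.1.1)))
    (hv_sp : Submodule.span k
      {y | ∃ t, 1 ≤ t ∧ t ≤ σ ∧ ∃ j : ℤ, -(p t : ℤ) ≤ j ∧ j ≤ (p t : ℤ) - 1 ∧ y = (g ^ j) (v t)}
      = ⊤)
    (hrank : ∀ K : ℕ, Module.finrank k
        (LinearMap.range ((g.toLinearMap - LinearMap.id : Module.End k V) ^ K))
      = ∑ r ∈ Finset.Icc 1 σ, (2 * p r - K)) :
    let X : ℕ → Submodule k V := fun r => Submodule.span k
      {y | ∃ j : ℤ, -(p r : ℤ) ≤ j ∧ j ≤ (p r : ℤ) - 1 ∧ y = (g ^ j) (v r)}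
    (∀ r ∈ Finset.Icc 1 σ, Submodule.map g.toLinearMap (X r) = X r) ∧
    (∀ r ∈ Finset.Icc 1 σ, ∀ r' ∈ Finset.Icc 1 σ, r ≠ r' →
      ∀ x ∈ X r, ∀ y ∈ X r', B x y = 0) :=
  stmt_12_general n σ p hp B halt hnd g hg v hv1 hv2 hv3 hv_sp hrank

end
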